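/- Under conditional independence of group membership given y=1 (both under the true distribution and conditioned on retention), for any subset I of the k groups, Pr[retained | x ∈ ∩_{i∈I} G_i, y=1] = β_0^{1−|I|} · ∏_{i∈I} β_i, where β_i = Pr[retained | x ∈ G_i, y=1] and β_0 = Pr[retained | y=1]. -/

import Mathlib

/-!
Work under `ν = μ[|Y]` and write `A = ⋂ i ∈ I, G i`. Bayes' rule in the form
`ν[R|B] ν B = ν[B|R] ν R`, applied to `B = A` and to each `B = G i`, turns the two product
hypotheses (for `ν` and for `ν[|R]`) into `ν[R|A] · ν(R)^|I| = ν(R) · ∏ ν[R|G i]`; the factor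
`ν A = ∏ ν (G i)` cancels because it is nonzero.
-/

open MeasureTheory ProbabilityTheory Finset

namespace ProbabilityTheory

variable {Ω ι : Type*} [MeasurableSpace Ω] {ν : Measure Ω} [IsFiniteMeasure ν]

lemma cond_toReal_mul_toReal_comm {s t : Set Ω} (hs : MeasurableSet s) (ht : MeasurableSet t) :
    (ν[t|s]).toReal * (ν s).toReal = (ν[s|t]).toReal * (ν t).toReal := by
  rw [← ENNReal.toReal_mul, ← ENNReal.toReal_mul, cond_mul_eq_inter hs, cond_mul_eq_inter ht,
    Set.inter_comm]

theorem cond_biInter_toReal_eq_zpow_mul_prod {G : ι → Set Ω} {R : Set Ω} {I : Finset ι}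
    (hR : MeasurableSet R) (hG : ∀ i ∈ I, MeasurableSet (G i))
    (hRpos : ν R ≠ 0) (hIpos : ν (⋂ i ∈ I, G i) ≠ 0)
    (hindep : ν (⋂ i ∈ I, G i) = ∏ i ∈ I, ν (G i))
    (hindepR : ν[|R] (⋂ i ∈ I, G i) = ∏ i ∈ I, ν[|R] (G i)) :
    (ν[R|⋂ i ∈ I, G i]).toReal = (ν R).toReal ^ ((1 : ℤ) - #I) * ∏ i ∈ I, (ν[R|G i]).toReal := by
  set A := ⋂ i ∈ I, G i
  have hRreal : (ν R).toReal ≠ 0 := ENNReal.toReal_ne_zero.2 ⟨hRpos, measure_ne_top ν R⟩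
  have hAreal : (ν A).toReal ≠ 0 := ENNReal.toReal_ne_zero.2 ⟨hIpos, measure_ne_top ν A⟩
  have bayesA := cond_toReal_mul_toReal_comm (ν := ν) (I.measurableSet_biInter hG) hR
  have bayesG : (∏ i ∈ I, (ν[R|G i]).toReal) * (ν A).toReal
      = (ν[|R] A).toReal * (ν R).toReal ^ #I := by
    rw [hindep, hindepR, ENNReal.toReal_prod, ENNReal.toReal_prod, ← prod_mul_distrib,
      ← prod_const, ← prod_mul_distrib]
    exact prod_congr rfl fun i hi ↦ cond_toReal_mul_toReal_comm (hG i hi) hR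
  have key : (ν[R|A]).toReal * (ν R).toReal ^ #I = (ν R).toReal * ∏ i ∈ I, (ν[R|G i]).toReal := by
    apply mul_right_cancel₀ hAreal
    linear_combination (ν R).toReal ^ #I * bayesA - (ν R).toReal * bayesG
  rw [zpow_sub₀ hRreal, zpow_one, zpow_natCast, div_mul_eq_mul_div, ← key,
    mul_div_cancel_right₀ _ (pow_ne_zero _ hRreal)]

end ProbabilityTheory

theorem stmt2_general {Ω : Type*} [MeasurableSpace Ω] (μ : Measure Ω) [IsProbabilityMeasure μ]
    (k : ℕ) (G : Fin k → Set Ω) (Y R : Set Ω)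
    (hYm : MeasurableSet Y) (hRm : MeasurableSet R) (hGm : ∀ i, MeasurableSet (G i))
    (hRYpos : μ (R ∩ Y) ≠ 0)
    (hGYpos : ∀ I : Finset (Fin k), μ ((⋂ i ∈ I, G i) ∩ Y) ≠ 0)
    (hcondindep : ∀ I : Finset (Fin k),
      μ[|Y] (⋂ i ∈ I, G i) = ∏ i ∈ I, μ[|Y] (G i))
    (hcondindepR : ∀ I : Finset (Fin k),
      μ[|R ∩ Y] (⋂ i ∈ I, G i) = ∏ i ∈ I, μ[|R ∩ Y] (G i)) :
    ∀ I : Finset (Fin k),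
      (μ[|(⋂ i ∈ I, G i) ∩ Y] R).toReal =
        (μ[|Y] R).toReal ^ ((1 : ℤ) - I.card) * ∏ i ∈ I, (μ[|G i ∩ Y] R).toReal := by
  intro I
  have cond_Y_cond {s : Set Ω} (hs : MeasurableSet s) : μ[|Y][|s] = μ[|s ∩ Y] := by
    rw [cond_cond_eq_cond_inter hYm hs, Set.inter_comm]
  have hRpos : μ[R|Y] ≠ 0 := (cond_pos_of_inter_ne_zero hYm (by rwa [Set.inter_comm])).ne'
  have hIpos : μ[⋂ i ∈ I, G i|Y] ≠ 0 :=
    (cond_pos_of_inter_ne_zero hYm (by rw [Set.inter_comm]; exact hGYpos I)).ne'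
  have hindepR := hcondindepR I
  rw [← cond_Y_cond hRm] at hindepR
  rw [← cond_Y_cond (I.measurableSet_biInter fun i _ ↦ hGm i),
    prod_congr rfl fun i _ ↦ by rw [← cond_Y_cond (hGm i)]]
  exact cond_biInter_toReal_eq_zpow_mul_prod hRm (fun i _ ↦ hGm i) hRpos hIpos (hcondindep I)
    hindepR

/-- Product formula for the retention probability of positive examples on an
intersection of groups, under conditional independence of group membership given
y=1, both under the true distribution and conditioned on retention. -/
theorem stmt2 {Ω : Type*} [MeasurableSpace Ω] (μ : Measure Ω) [IsProbabilityMeasure μ]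
    (k : ℕ) (G : Fin k → Set Ω) (Y R : Set Ω)
    (hYm : MeasurableSet Y) (hRm : MeasurableSet R) (hGm : ∀ i, MeasurableSet (G i))
    (hYpos : μ Y ≠ 0) (hRYpos : μ (R ∩ Y) ≠ 0)
    (hGYpos : ∀ I : Finset (Fin k), μ ((⋂ i ∈ I, G i) ∩ Y) ≠ 0)
    (hcondindep : ∀ I : Finset (Fin k),
      μ[|Y] (⋂ i ∈ I, G i) = ∏ i ∈ I, μ[|Y] (G i))
    (hcondindepR : ∀ I : Finset (Fin k),
      μ[|R ∩ Y] (⋂ i ∈ I, G i) = ∏ i ∈ I, μ[|R ∩ Y] (G i)) :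
    ∀ I : Finset (Fin k),
      (μ[|(⋂ i ∈ I, G i) ∩ Y] R).toReal =
        (μ[|Y] R).toReal ^ ((1 : ℤ) - I.card) * ∏ i ∈ I, (μ[|G i ∩ Y] R).toReal :=
  stmt2_general μ k G Y R hYm hRm hGm hRYpos hGYpos hcondindep hcondindepR
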